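/- Dominance lemma for two machines: consider a two-machine JIT flow-shop instance whose n jobs are numbered in EDD order, d_1 ≤ d_2 ≤ … ≤ d_n. Let j ∈ {1,…,n} and let E_1, E_2 ⊆ {J_1,…,J_j} be feasible sets satisfying Σ_{l∈E_1} w_l ≥ Σ_{l∈E_2} w_l, Σ_{l∈E_1} p^(1)_l ≤ Σ_{l∈E_2} p^(1)_l, and max{d_l : l ∈ E_1} ≤ max{d_l : l ∈ E_2} (where the maximum of the empty set is 0). Then for every F ⊆ {J_{j+1},…,J_n} all of whose jobs have due date strictly greater than max{d_l : l ∈ E_2}: if E_2 ∪ F is feasible, then E_1 ∪ F is feasible and Σ_{l∈E_1∪F} w_l ≥ Σ_{l∈E_2∪F} w_l (i.e., the subschedule inducing E_2 is dominated by the one inducing E_1). -/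
import Mathlib


open Finset

/-- A just-in-time flow-shop instance on `m` machines with jobs of type `J`:
`p i j` is the (positive integer) processing time of job `j` on machine `i`,
`d j` its positive integer due date and `w j` its positive integer weight. -/
structure JITInstance (m : ℕ) (J : Type) where
  p : Fin m → J → ℕ
  d : J → ℕ
  w : J → ℕ
  p_pos : ∀ i j, 0 < p i j
  d_pos : ∀ j, 0 < d j
  w_pos : ∀ j, 0 < w j

/-- `S` is a JIT schedule of the job set `E`: on every machine the processing
intervals `(S i j, S i j + p i j]` of distinct jobs of `E` are pairwise disjoint,
each job's operation on machine `i+1` starts no earlier than its completion on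
machine `i`, and every job of `E` completes on the last machine exactly at its
due date.  (Start times are nonnegative automatically, being naturals.) -/
def IsJITSchedule {m : ℕ} {J : Type} (I : JITInstance m J)
    (E : Finset J) (S : Fin m → J → ℕ) : Prop :=
  (∀ i : Fin m, ∀ j ∈ E, ∀ j' ∈ E, j ≠ j' →
      S i j + I.p i j ≤ S i j' ∨ S i j' + I.p i j' ≤ S i j) ∧
  (∀ j ∈ E, ∀ i i' : Fin m, i'.val = i.val + 1 →
      S i j + I.p i j ≤ S i' j) ∧
  (∀ j ∈ E, ∀ i : Fin m, i.val = m - 1 →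
      S i j + I.p i j = I.d j)

/-- A job set is feasible if it admits a JIT schedule. -/
def Feasible {m : ℕ} {J : Type} (I : JITInstance m J) (E : Finset J) : Prop :=
  ∃ S : Fin m → J → ℕ, IsJITSchedule I E S

/-- Interval packing: pairwise disjoint positive intervals `(a x, a x + pr x]`
all contained in `(0, T]` have total length at most `T`. -/
lemma jit_packing {α : Type*} [DecidableEq α] (pr : α → ℕ) :
    ∀ (s : Finset α) (a : α → ℕ) (T : ℕ),
      (∀ x ∈ s, 0 < pr x) →
      (∀ x ∈ s, a x + pr x ≤ T) →
      (∀ x ∈ s, ∀ y ∈ s, x ≠ y → a x + pr x ≤ a y ∨ a y + pr y ≤ a x) →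
      ∑ x ∈ s, pr x ≤ T := by
  intro s
  induction s using Finset.strongInduction with
  | _ s ih =>
    intro a T hpos hT hdis
    rcases s.eq_empty_or_nonempty with rfl | hne
    · simp
    · obtain ⟨x, hx, hmax⟩ := s.exists_max_image (fun y => a y + pr y) hne
      have hsub : s.erase x ⊂ s := Finset.erase_ssubset hx
      have h1 : ∀ y ∈ s.erase x, a y + pr y ≤ a x := by
        intro y hy
        have hyx : y ≠ x := Finset.ne_of_mem_erase hy
        have hys : y ∈ s := Finset.mem_of_mem_erase hy
        rcases hdis y hys x hx hyx with h | h
        · exact h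
        · have h2 := hmax y hys
          have h3 := hpos y hys
          omega
      have h2 : ∑ y ∈ s.erase x, pr y ≤ a x :=
        ih _ hsub a (a x) (fun y hy => hpos y (Finset.mem_of_mem_erase hy)) h1
          (fun y hy z hz => hdis y (Finset.mem_of_mem_erase hy) z (Finset.mem_of_mem_erase hz))
      have h3 := hT x hx
      have h4 : ∑ y ∈ s, pr y = pr x + ∑ y ∈ s.erase x, pr y :=
        (Finset.add_sum_erase s pr hx).symm
      omega

/-- dominance lemma for two machines.  Jobs are numbered in EDD
order (`I.d` is monotone on `Fin n`).  If `E₁, E₂` are feasible sets of jobs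
with index at most `j` such that `E₁` has at least the weight of `E₂`, at most
its total first-machine processing time, and at most its largest due date, then
for every set `F` of jobs of index greater than `j` whose due dates all exceed
the largest due date of `E₂`: if `E₂ ∪ F` is feasible then so is `E₁ ∪ F`, and
`E₁ ∪ F` has at least the weight of `E₂ ∪ F`. -/
theorem jit_two_machines_dominance {n : ℕ} (I : JITInstance 2 (Fin n))
    (hEDD : Monotone I.d) (j : Fin n) (E1 E2 : Finset (Fin n))
    (hE1 : E1 ⊆ Finset.Iic j) (hE2 : E2 ⊆ Finset.Iic j)
    (hfeas1 : Feasible I E1) (hfeas2 : Feasible I E2)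
    (hw : ∑ l ∈ E2, I.w l ≤ ∑ l ∈ E1, I.w l)
    (hp : ∑ l ∈ E1, I.p 0 l ≤ ∑ l ∈ E2, I.p 0 l)
    (hd : E1.sup I.d ≤ E2.sup I.d)
    (F : Finset (Fin n)) (hF : F ⊆ Finset.Ioi j)
    (hFd : ∀ l ∈ F, E2.sup I.d < I.d l)
    (hfeasF : Feasible I (E2 ∪ F)) :
    Feasible I (E1 ∪ F) ∧ ∑ l ∈ E2 ∪ F, I.w l ≤ ∑ l ∈ E1 ∪ F, I.w l := by
  classical
  obtain ⟨T, hT1, hT2, hT3⟩ := hfeas1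
  obtain ⟨U, hU1, hU2, hU3⟩ := hfeasF
  have hn : 0 < n := j.pos
  set D2 : Fin n → ℕ := fun x => I.d x - I.p 1 x with hD2def
  have hD2eq : ∀ x, D2 x = I.d x - I.p 1 x := fun x => rfl
  -- facts extracted from the schedule of E1
  have hT1' : ∀ x ∈ E1, T 1 x = D2 x ∧ I.p 1 x ≤ I.d x := by
    intro x hx
    have h := hT3 x hx 1 rfl
    have h2 := hD2eq x
    omega
  have hTm : ∀ x ∈ E1, T 0 x + I.p 0 x ≤ D2 x := by
    intro x hx
    have h := hT2 x hx 0 1 rfl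
    have h2 := (hT1' x hx).1
    omega
  -- facts extracted from the schedule of E2 ∪ F
  have hU1' : ∀ x ∈ E2 ∪ F, U 1 x = D2 x ∧ I.p 1 x ≤ I.d x := by
    intro x hx
    have h := hU3 x hx 1 rfl
    have h2 := hD2eq x
    omega
  have hUm : ∀ x ∈ E2 ∪ F, U 0 x + I.p 0 x ≤ D2 x := by
    intro x hx
    have h := hU2 x hx 0 1 rfl
    have h2 := (hU1' x hx).1
    omega
  have hd1F : Disjoint E1 F := by
    rw [Finset.disjoint_left]
    intro x hx hxF
    have h1 := Finset.mem_Iic.mp (hE1 hx)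
    have h2 := Finset.mem_Ioi.mp (hF hxF)
    exact absurd (h1.trans_lt h2) (lt_irrefl x)
  have hd2F : Disjoint E2 F := by
    rw [Finset.disjoint_left]
    intro x hx hxF
    have h1 := Finset.mem_Iic.mp (hE2 hx)
    have h2 := Finset.mem_Ioi.mp (hF hxF)
    exact absurd (h1.trans_lt h2) (lt_irrefl x)
  -- every job of F starts on machine 2 no earlier than the largest due date of E2
  have star : ∀ l ∈ F, E2.sup I.d ≤ D2 l := by
    intro l hl
    rcases E2.eq_empty_or_nonempty with h | hne
    · simp [h]
    · obtain ⟨b, hb, hbe⟩ := Finset.exists_mem_eq_sup E2 hne I.d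
      have hbl : b ≠ l := by
        rintro rfl
        have h3 := hFd b hl
        omega
      have hbG : b ∈ E2 ∪ F := Finset.mem_union_left _ hb
      have hlG : l ∈ E2 ∪ F := Finset.mem_union_right _ hl
      have hdis := hU1 1 b hbG l hlG hbl
      have h1 := hU1' b hbG
      have h2 := hU1' l hlG
      have h3 := hFd l hl
      have h4 := hD2eq b
      have h5 := hD2eq l
      omega
  have hE1d : ∀ x ∈ E1, I.d x ≤ E2.sup I.d :=
    fun x hx => le_trans (Finset.le_sup hx) hd
  have D2le : ∀ x, D2 x ≤ I.d x := fun x => Nat.sub_le _ _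
  -- the EDD key (deadline, then index)
  set key : Fin n → ℕ := fun x => x.val + D2 x * n with hkeydef
  have hkeyeq : ∀ x, key x = x.val + D2 x * n := fun x => rfl
  have hmuln : ∀ a b : ℕ, a < b → a * n + n ≤ b * n := by
    intro a b h
    calc a * n + n = (a + 1) * n := by ring
      _ ≤ b * n := Nat.mul_le_mul_right n h
  have keyD2 : ∀ x y : Fin n, key x ≤ key y → D2 x ≤ D2 y := by
    intro x y h
    by_contra hc
    have h1 := hmuln (D2 y) (D2 x) (by omega)
    have h2 := hkeyeq x
    have h3 := hkeyeq y
    have h4 := y.isLt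
    omega
  have keyinj : ∀ x y : Fin n, key x = key y → x = y := by
    intro x y h
    have h1 : D2 x = D2 y :=
      le_antisymm (keyD2 x y h.le) (keyD2 y x h.ge)
    have h2 := hkeyeq x
    have h3 := hkeyeq y
    rw [h1] at h2
    exact Fin.ext (by omega)
  -- the key load inequality
  have keyineq : ∀ l ∈ E1 ∪ F,
      ∑ y ∈ (E1 ∪ F).filter (fun y => key y ≤ key l), I.p 0 y ≤ D2 l := by
    intro l hl
    by_cases hlF : l ∈ F
    · have hsup : E2.sup I.d ≤ D2 l := star l hlF
      have hsub : (E1 ∪ F).filter (fun y => key y ≤ key l) ⊆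
          E1 ∪ F.filter (fun y => key y ≤ key l) := by
        intro y hy
        rcases Finset.mem_filter.mp hy with ⟨hyG, hkey⟩
        rcases Finset.mem_union.mp hyG with h | h
        · exact Finset.mem_union_left _ h
        · exact Finset.mem_union_right _ (Finset.mem_filter.mpr ⟨h, hkey⟩)
      calc ∑ y ∈ (E1 ∪ F).filter (fun y => key y ≤ key l), I.p 0 y
          ≤ ∑ y ∈ E1 ∪ F.filter (fun y => key y ≤ key l), I.p 0 y :=
            Finset.sum_le_sum_of_subset hsub
        _ = ∑ y ∈ E1, I.p 0 y + ∑ y ∈ F.filter (fun y => key y ≤ key l), I.p 0 y :=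
            Finset.sum_union (hd1F.mono_right (Finset.filter_subset _ _))
        _ ≤ ∑ y ∈ E2, I.p 0 y + ∑ y ∈ F.filter (fun y => key y ≤ key l), I.p 0 y := by
            omega
        _ = ∑ y ∈ E2 ∪ F.filter (fun y => key y ≤ key l), I.p 0 y :=
            (Finset.sum_union (hd2F.mono_right (Finset.filter_subset _ _))).symm
        _ ≤ D2 l := by
            apply jit_packing (I.p 0) _ (U 0)
            · intro x _
              exact I.p_pos 0 x
            · intro x hx
              rcases Finset.mem_union.mp hx with h | h
              · have h1 := hUm x (Finset.mem_union_left _ h)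
                have h2 := D2le x
                have h3 : I.d x ≤ E2.sup I.d := Finset.le_sup h
                omega
              · rcases Finset.mem_filter.mp h with ⟨hxF, hk⟩
                have h1 := hUm x (Finset.mem_union_right _ hxF)
                have h2 := keyD2 x l hk
                omega
            · intro x hx y hy hxy
              exact hU1 0 x
                ((Finset.union_subset_union_right (Finset.filter_subset _ _)) hx) y
                ((Finset.union_subset_union_right (Finset.filter_subset _ _)) hy) hxy
    · have hlE : l ∈ E1 := by
        rcases Finset.mem_union.mp hl with h | h
        · exact h
        · exact absurd h hlF
      have hsub : (E1 ∪ F).filter (fun y => key y ≤ key l) ⊆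
          E1.filter (fun y => key y ≤ key l) := by
        intro y hy
        rcases Finset.mem_filter.mp hy with ⟨hyG, hkey⟩
        rcases Finset.mem_union.mp hyG with h | h
        · exact Finset.mem_filter.mpr ⟨h, hkey⟩
        · exfalso
          have h1 := keyD2 y l hkey
          have h2 : D2 l ≤ D2 y :=
            le_trans (le_trans (D2le l) (hE1d l hlE)) (star y h)
          have he : D2 y = D2 l := le_antisymm h1 h2
          have hkey' : y.val + D2 y * n ≤ l.val + D2 l * n := by
            rw [← hkeyeq y, ← hkeyeq l]; exact hkey
          rw [he] at hkey'
          have h3 : y.val ≤ l.val := by omega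
          have h4 := Finset.mem_Iic.mp (hE1 hlE)
          have h5 := Finset.mem_Ioi.mp (hF h)
          have h6 : l < y := h4.trans_lt h5
          rw [Fin.lt_def] at h6
          omega
      calc ∑ y ∈ (E1 ∪ F).filter (fun y => key y ≤ key l), I.p 0 y
          ≤ ∑ y ∈ E1.filter (fun y => key y ≤ key l), I.p 0 y :=
            Finset.sum_le_sum_of_subset hsub
        _ ≤ D2 l := by
            apply jit_packing (I.p 0) _ (T 0)
            · intro x _
              exact I.p_pos 0 x
            · intro x hx
              rcases Finset.mem_filter.mp hx with ⟨hxE, hk⟩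
              have h1 := hTm x hxE
              have h2 := keyD2 x l hk
              omega
            · intro x hx y hy hxy
              exact hT1 0 x (Finset.filter_subset _ _ hx) y (Finset.filter_subset _ _ hy) hxy
  have hp1le : ∀ x ∈ E1 ∪ F, I.p 1 x ≤ I.d x := by
    intro x hx
    rcases Finset.mem_union.mp hx with h | h
    · exact (hT1' x h).2
    · exact (hU1' x (Finset.mem_union_right _ h)).2
  -- the schedule of E1 ∪ F
  set S : Fin 2 → Fin n → ℕ := fun i x =>
    if i = 0 then ∑ y ∈ (E1 ∪ F).filter (fun y => key y < key x), I.p 0 y else D2 x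
    with hSdef
  have hS0 : ∀ x, S 0 x = ∑ y ∈ (E1 ∪ F).filter (fun y => key y < key x), I.p 0 y :=
    fun x => rfl
  have hS1 : ∀ x, S 1 x = D2 x := fun x => rfl
  have hsplit : ∀ x ∈ E1 ∪ F,
      S 0 x + I.p 0 x = ∑ y ∈ (E1 ∪ F).filter (fun y => key y ≤ key x), I.p 0 y := by
    intro x hx
    have hins : (E1 ∪ F).filter (fun y => key y ≤ key x)
        = insert x ((E1 ∪ F).filter (fun y => key y < key x)) := by
      ext y
      simp only [Finset.mem_filter, Finset.mem_insert]
      constructor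
      · rintro ⟨hyG, hk⟩
        rcases lt_or_eq_of_le hk with h | h
        · exact Or.inr ⟨hyG, h⟩
        · exact Or.inl (keyinj _ _ h)
      · rintro (rfl | ⟨hyG, hk⟩)
        · exact ⟨hx, le_refl _⟩
        · exact ⟨hyG, le_of_lt hk⟩
    rw [hins, Finset.sum_insert (by simp), hS0 x]
    omega
  constructor
  · refine ⟨S, ?_, ?_, ?_⟩
    · -- disjointness on each machine
      intro i x hx y hy hxy
      by_cases hi : i = 0
      · subst hi
        have hk : key x ≠ key y := fun h => hxy (keyinj _ _ h)
        rcases lt_or_gt_of_ne hk with h | h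
        · left
          rw [hsplit x hx, hS0 y]
          apply Finset.sum_le_sum_of_subset
          intro z hz
          rcases Finset.mem_filter.mp hz with ⟨hzG, hzk⟩
          exact Finset.mem_filter.mpr ⟨hzG, lt_of_le_of_lt hzk h⟩
        · right
          rw [hsplit y hy, hS0 x]
          apply Finset.sum_le_sum_of_subset
          intro z hz
          rcases Finset.mem_filter.mp hz with ⟨hzG, hzk⟩
          exact Finset.mem_filter.mpr ⟨hzG, lt_of_le_of_lt hzk h⟩
      · have hi1 : i = 1 := by
          have h1 := i.isLt
          have h2 : i.val ≠ 0 := fun h => hi (Fin.ext h)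
          exact Fin.ext (by omega)
        subst hi1
        rw [hS1 x, hS1 y]
        have hdx := hD2eq x
        have hdy := hD2eq y
        rcases Finset.mem_union.mp hx with hx1 | hx1 <;>
          rcases Finset.mem_union.mp hy with hy1 | hy1
        · have h := hT1 1 x hx1 y hy1 hxy
          have a1 := hT1' x hx1
          have a2 := hT1' y hy1
          omega
        · left
          have h1 := star y hy1
          have h2 := hE1d x hx1
          have h3 := (hT1' x hx1).2
          omega
        · right
          have h1 := star x hx1
          have h2 := hE1d y hy1
          have h3 := (hT1' y hy1).2
          omega
        · have h := hU1 1 x (Finset.mem_union_right _ hx1) y (Finset.mem_union_right _ hy1) hxy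
          have a1 := hU1' x (Finset.mem_union_right _ hx1)
          have a2 := hU1' y (Finset.mem_union_right _ hy1)
          omega
    · -- precedence between machines
      intro x hx i i' h
      have hlt := i'.isLt
      have hi : i = 0 := Fin.ext (by omega)
      have hi' : i' = 1 := Fin.ext (by omega)
      subst hi; subst hi'
      rw [hS1 x, hsplit x hx]
      exact keyineq x hx
    · -- just-in-time completion
      intro x hx i hival
      have hi : i = 1 := Fin.ext (by omega)
      subst hi
      rw [hS1 x]
      have h1 := hD2eq x
      have h2 := hp1le x hx
      omega
  · rw [Finset.sum_union hd2F, Finset.sum_union hd1F]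
    omega
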